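/- Let C_n = {(m_1,...,m_p) : m_1 ≥ m_2 ≥ ... ≥ m_p ≥ 2, and m_i ≥ m_{i+n-1} + 2 for all valid i} (Gordon-type partitions). The generating function ∑ q^{m_1+...+m_p} over all finite sequences in C_n with m_1 ≤ N satisfies the vector recursion w_N = M_n(q^N)·w_{N-1}, where w_N = (w_N^0,...,w_N^{n-1}), w_N^r is the generating function over sequences in C_n with m_1 ≤ N and m_{r+1} ≤ N-1, and M_n(x) is the n×n matrix with (M_n)_{rj} = x^{n-j} for (r+1)+j ≥ n+1 and 0 otherwise, with w_0 = (0,...,0,1). -/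

import Mathlib

/-- The matrix `M_n(x)`: with rows `r = 0,…,n-1` and 1-based columns `j = 1,…,n`,
`(M_n)_{rj} = x^{n-j}` if `(r+1)+j ≥ n+1` and `0` otherwise.  Here both indices run
over `Fin n`, the column `j0` corresponding to `j = j0 + 1`. -/
noncomputable def Mmat (n : ℕ) (x : ℝ) : Matrix (Fin n) (Fin n) ℝ :=
  fun r j => if n ≤ (r : ℕ) + (j : ℕ) + 1 then x ^ (n - 1 - (j : ℕ)) else 0

/-- Gordon-type condition: `(m_1,…,m_p)` weakly decreasing, all parts `≥ 2` and `≤ N`,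
`m_i ≥ m_{i+n-1} + 2`, and `m_{r+1} ≤ N - 1` if `p ≥ r + 1` (indices here 0-based). -/
def GordonCond (n N r : ℕ) (l : List ℕ) : Prop :=
  l.Pairwise (· ≥ ·) ∧ (∀ m ∈ l, 2 ≤ m) ∧
    (∀ i, i + (n - 1) < l.length → l.getD (i + (n - 1)) 0 + 2 ≤ l.getD i 0) ∧
    (∀ m ∈ l, m ≤ N) ∧ (r + 1 ≤ l.length → l.getD r 0 ≤ N - 1)

/-- The vector of generating functions `w_N = (w_N^0,…,w_N^{n-1})`, with the convention
`w_0 = (0,…,0,1)`. -/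
noncomputable def wvec (n : ℕ) (q : ℝ) : ℕ → Fin n → ℝ := fun N r =>
  if N = 0 then (if (r : ℕ) = n - 1 then 1 else 0)
  else ∑' l : { l : List ℕ // GordonCond n N (r : ℕ) l }, q ^ (l : List ℕ).sum


/-!
Split off the run of parts equal to `N`: a sequence counted by `w_N^r` is `k` copies of `N`
followed by a sequence with parts `≤ N - 1`, and `m_{r+1} ≤ N - 1` forces `k ≤ r`. The
difference-two condition across the run, `m_i ≥ m_{i+n-1} + 2` with `m_i = N`, says exactly that
the `(n - k)`-th part of the tail is `≤ N - 2`, i.e. the tail is counted by `w_{N-1}^{n-1-k}`.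
Hence `w_N^r = ∑_{k ≤ r} q^{kN} w_{N-1}^{n-1-k}`, which is row `r` of `M_n(q^N) w_{N-1}`
(column `j = n - k`). All sums are finite because the difference-two condition bounds the length
by `(n - 1) N`. The case `N = 1` is separate: `w_0` is a convention, not a generating function.
-/

open List

namespace List

variable {α : Type*}

theorem getD_mem {l : List α} {i : ℕ} (d : α) (h : i < l.length) : l.getD i d ∈ l := by
  rw [getD_eq_getElem _ _ h]
  exact getElem_mem h

theorem getD_replicate_append (k : ℕ) (a : α) (l : List α) (i : ℕ) (d : α) :
    (replicate k a ++ l).getD i d = if i < k then a else l.getD (i - k) d := by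
  split_ifs with hi
  · rw [getD_append _ _ _ _ (by simpa using hi), getD_replicate _ hi]
  · rw [getD_append_right _ _ _ _ (by simpa using hi), length_replicate]

theorem Pairwise.getD_le_getD [Preorder α] {l : List α} (h : l.Pairwise (· ≥ ·)) (d : α)
    {i j : ℕ} (hij : i ≤ j) (hj : j < l.length) : l.getD j d ≤ l.getD i d := by
  rw [getD_eq_getElem _ _ hj, getD_eq_getElem _ _ (hij.trans_lt hj)]
  exact h.rel_get_of_le (a := ⟨i, hij.trans_lt hj⟩) (b := ⟨j, hj⟩) hij

theorem replicate_count_append_drop {N : ℕ} {l : List ℕ} (hl : l.Pairwise (· ≥ ·))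
    (hN : ∀ m ∈ l, m ≤ N) : replicate (l.count N) N ++ l.drop (l.count N) = l := by
  induction l with
  | nil => rfl
  | cons a t ih =>
    rw [pairwise_cons] at hl
    have ht := ih hl.2 fun m hm => hN m (mem_cons_of_mem a hm)
    by_cases ha : a = N
    · subst ha
      rw [count_cons_self, replicate_succ, cons_append, drop_succ_cons, ht]
    · have hcount : (a :: t).count N = 0 := by
        refine count_eq_zero.2 fun hmem => ha ?_
        rcases mem_cons.1 hmem with h | h
        · exact h.symm
        · exact le_antisymm (hN a mem_cons_self) (hl.1 N h)
      rw [hcount, replicate_zero, nil_append, drop_zero]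

end List

namespace GordonCond

variable {n N r : ℕ} {l : List ℕ}

theorem getD_mul_add_le (h : GordonCond n N r l) (k : ℕ) (hk : (n - 1) * k < l.length) :
    l.getD ((n - 1) * k) 0 + 2 * k ≤ l.getD 0 0 := by
  obtain ⟨-, -, hgap, -, -⟩ := h
  induction k with
  | zero => simp
  | succ k ih =>
    have := hgap ((n - 1) * k) (by rwa [Nat.mul_succ] at hk)
    have := ih (lt_of_le_of_lt (Nat.mul_le_mul_left _ k.le_succ) hk)
    rw [Nat.mul_succ]
    omega

theorem length_le (h : GordonCond n N r l) : l.length ≤ (n - 1) * N := by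
  by_contra! hlen
  have hchain := h.getD_mul_add_le N hlen
  obtain ⟨-, hge, -, hle, -⟩ := h
  have := hge _ (getD_mem 0 hlen)
  have := hle _ (getD_mem 0 (i := 0) (by omega))
  omega

theorem setOf_finite (n N r : ℕ) : {l | GordonCond n N r l}.Finite := by
  refine ((List.finite_length_le (Fin (N + 1)) ((n - 1) * N)).image (map Fin.val)).subset
    fun l hl => ⟨l.pmap Fin.mk fun m hm => Nat.lt_succ_of_le (hl.2.2.2.1 m hm), ?_, ?_⟩
  · simpa using hl.length_le
  · simp [map_pmap]

instance (n N r : ℕ) : Finite {l // GordonCond n N r l} := (setOf_finite n N r).to_subtype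

theorem notMem (hN : 0 < N) (h : GordonCond n (N - 1) r l) : N ∉ l := fun hm => by
  have := h.2.2.2.1 N hm
  omega

end GordonCond

section Split

variable {n N r k : ℕ} {l : List ℕ}

theorem gordonCond_replicate_append_iff (hN : 2 ≤ N) (hr : r < n) (hl : N ∉ l) :
    GordonCond n N r (replicate k N ++ l) ↔ k ≤ r ∧ GordonCond n (N - 1) (n - 1 - k) l := by
  simp only [GordonCond, getD_replicate_append, pairwise_append, pairwise_replicate, mem_append,
    length_append, length_replicate]
  constructor
  · rintro ⟨⟨-, hsorted, -⟩, hge, hgap, hle, hrow⟩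
    have hkr : k ≤ r := by
      by_contra! hrk
      have := hrow (by omega)
      rw [if_pos hrk] at this
      omega
    have hlt : ∀ m ∈ l, m ≤ N - 1 := fun m hm => by
      have := hle m (Or.inr hm)
      have : m ≠ N := fun h => hl (h ▸ hm)
      omega
    refine ⟨hkr, hsorted, fun m hm => hge m (Or.inr hm), fun i hi => ?_, hlt, fun hi => ?_⟩
    · have := hgap (i + k) (by omega)
      rwa [if_neg (by omega), if_neg (by omega), Nat.add_sub_cancel,
        show i + k + (n - 1) - k = i + (n - 1) by omega] at this
    · have := hgap 0 (by omega)
      rw [if_neg (by omega), show 0 + (n - 1) - k = n - 1 - k by omega] at this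
      split_ifs at this with hk
      · omega
      · rw [Nat.zero_sub] at this
        have := hlt _ (getD_mem 0 (l := l) (i := 0) (by omega))
        omega
  · rintro ⟨hkr, hsorted, hge, hgap, hle, hrow⟩
    refine ⟨⟨Or.inr le_rfl, hsorted, fun a ha b hb => ?_⟩, ?_, fun i hi => ?_, ?_, fun hi => ?_⟩
    · rw [eq_of_mem_replicate ha]
      exact (hle b hb).trans (Nat.sub_le N 1)
    · rintro m (hm | hm)
      · rw [eq_of_mem_replicate hm]; exact hN
      · exact hge m hm
    · split_ifs with h₁ h₂ h₂
      · omega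
      · omega
      · -- `m_i = N`, and `m_{i+n-1}` lies in the tail past its entry `n - 1 - k ≤ N - 2`
        have := hsorted.getD_le_getD 0 (show n - 1 - k ≤ i + (n - 1) - k by omega) (by omega)
        have := hrow (by omega)
        omega
      · have := hgap (i - k) (by omega)
        rwa [show i - k + (n - 1) = i + (n - 1) - k by omega] at this
    · rintro m (hm | hm)
      · rw [eq_of_mem_replicate hm]
      · exact (hle m hm).trans (Nat.sub_le N 1)
    · rw [if_neg (by omega)]
      exact hle _ (getD_mem 0 (by omega))

theorem GordonCond.count_le_and_drop (hN : 2 ≤ N) (hr : r < n) (h : GordonCond n N r l) :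
    l.count N ≤ r ∧ GordonCond n (N - 1) (n - 1 - l.count N) (l.drop (l.count N)) := by
  have hsplit := replicate_count_append_drop h.1 h.2.2.2.1
  have hcount := congrArg (count N) hsplit
  rw [count_append, count_replicate_self] at hcount
  exact (gordonCond_replicate_append_iff hN hr (count_eq_zero.1 (by omega))).1 (by rwa [hsplit])

def gordonSplit (hN : 2 ≤ N) (r : Fin n) :
    (Σ j : {j : Fin n // n ≤ (r : ℕ) + j + 1}, {l // GordonCond n (N - 1) j l}) ≃
      {l // GordonCond n N r l} where
  toFun x := ⟨replicate (n - 1 - x.1) N ++ x.2,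
    (gordonCond_replicate_append_iff hN r.2 (x.2.2.notMem (by omega))).2
      ⟨by have := x.1.2; omega, by rw [Nat.sub_sub_self (by omega)]; exact x.2.2⟩⟩
  invFun l := ⟨⟨⟨n - 1 - l.1.count N, by have := r.pos; omega⟩, by
      have := (l.2.count_le_and_drop hN r.2).1; dsimp only; omega⟩,
    ⟨l.1.drop (l.1.count N), (l.2.count_le_and_drop hN r.2).2⟩⟩
  left_inv := by
    rintro ⟨⟨j, hj⟩, l, hl⟩
    have hcount : (replicate (n - 1 - j) N ++ l).count N = n - 1 - j := by
      rw [count_append, count_replicate_self, count_eq_zero.2 (hl.notMem (by omega)), add_zero]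
    refine Sigma.subtype_ext (Subtype.ext (Fin.ext ?_)) ?_
    · simp only [hcount]
      omega
    · simp only [hcount, drop_left' length_replicate]
  right_inv := by
    rintro ⟨l, hl⟩
    refine Subtype.ext ?_
    dsimp only
    rw [Nat.sub_sub_self (by have := (hl.count_le_and_drop hN r.2).1; omega)]
    exact replicate_count_append_drop hl.1 hl.2.2.2.1

end Split

section Recursion

variable {n : ℕ}

theorem wvec_eq_sum (q : ℝ) {N : ℕ} (hN : 2 ≤ N) (r : Fin n) :
    wvec n q N r = ∑ j : {j : Fin n // n ≤ (r : ℕ) + j + 1},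
      (q ^ N) ^ (n - 1 - (j : ℕ)) * wvec n q (N - 1) j := by
  rw [wvec, if_neg (by omega), ← (gordonSplit hN r).tsum_eq, Summable.tsum_sigma .of_finite,
    tsum_fintype]
  refine Finset.sum_congr rfl fun j _ => ?_
  rw [wvec, if_neg (by omega), ← tsum_mul_left]
  refine tsum_congr fun l => ?_
  simp [gordonSplit, sum_append, sum_replicate, pow_add, pow_mul, mul_comm]

theorem Mmat_mulVec_apply (x : ℝ) (v : Fin n → ℝ) (r : Fin n) :
    (Mmat n x).mulVec v r =
      ∑ j : {j : Fin n // n ≤ (r : ℕ) + j + 1}, x ^ (n - 1 - (j : ℕ)) * v j := by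
  simp only [Matrix.mulVec, dotProduct, Mmat, ite_mul, zero_mul]
  rw [Finset.sum_ite, Finset.sum_const_zero, add_zero]
  exact Finset.sum_subtype _ (by simp) _

theorem wvec_one (q : ℝ) : wvec n q 1 = 1 := by
  funext r
  have hnil : ∀ l : {l // GordonCond n 1 r l}, l.1 = [] := fun ⟨l, _, hge, _, hle, _⟩ =>
    eq_nil_iff_forall_not_mem.2 fun m hm => by
      have := hge m hm
      have := hle m hm
      omega
  rw [wvec, if_neg one_ne_zero, tsum_eq_single ⟨[], by simp [GordonCond]⟩
    fun l hl => absurd (Subtype.ext (hnil l)) hl]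
  simp

theorem wvec_zero (q : ℝ) (hn : 0 < n) : wvec n q 0 = Pi.single ⟨n - 1, by omega⟩ 1 := by
  funext j
  simp [wvec, Pi.single_apply, Fin.ext_iff]

end Recursion

theorem gordon_recursion_general (n : ℕ) (q : ℝ) (N : ℕ) (hN : 1 ≤ N) :
    wvec n q N = (Mmat n (q ^ N)).mulVec (wvec n q (N - 1)) := by
  funext r
  obtain rfl | hN := hN.eq_or_lt'
  · rw [wvec_one, Nat.sub_self, wvec_zero q r.pos, Matrix.mulVec_single_one]
    simp [Mmat]
    omega
  · rw [wvec_eq_sum q hN, Mmat_mulVec_apply]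

theorem gordon_recursion (n : ℕ) (hn : 1 < n) (q : ℝ) (N : ℕ) (hN : 1 ≤ N) :
    wvec n q N = (Mmat n (q ^ N)).mulVec (wvec n q (N - 1)) :=
  gordon_recursion_general n q N hN
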